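/- arXiv:2207.03403 — 3 statements merged into one kernel-verified Lean document; each statement's English description precedes it below -/
import Mathlib

section
/- Fidelity after graph state distribution: for every n ≥ 2, every simple graph G on n vertices with adjacency matrix A(G), and all two-qubit density matrices ρ₁ on A₁R₁, ρ₂ on A₂R₂, …, ρ_n on A_nR_n, the fidelity of the output of the graph state distribution channel with the graph state satisfies ⟨G| L^{(G)}(ρ₁ ⊗ ⋯ ⊗ ρ_n) |G⟩ = ∑_{x⃗ ∈ {0,1}^n} ∏_{i=1}^{n} ⟨Φ^{z_i,x_i}|ρ_i|Φ^{z_i,x_i}⟩, where z⃗ = A(G)·x⃗ mod 2. -/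
open BigOperators Matrix
open scoped ComplexOrder

noncomputable section

/-- A qubit, with the bit-flip arithmetic of `ZMod 2`. -/
abbrev Qb := ZMod 2

/-- The qubit Bell state vector `|Φ^{z,x}⟩ = (Z^z X^x ⊗ 1)|Φ⟩`. -/
def bellVec (z x : Qb) : Qb × Qb → ℂ :=
  fun jk => if jk.1 = jk.2 + x then ((-1 : ℂ)) ^ ((jk.1 * z).val) / (Real.sqrt 2 : ℂ) else 0

/-- The Pauli power `Z^z` on a qubit. -/
def Zop2 (z : Qb) : Matrix Qb Qb ℂ :=
  Matrix.of fun i j => if i = j then ((-1 : ℂ)) ^ (z.val * i.val) else 0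

/-- The quadratic form `(1/2) α⊤ A(G) α = ∑_{{i,j} ∈ E} α_i α_j` of a graph `G`. -/
def quadForm (n : ℕ) (G : SimpleGraph (Fin n)) [DecidableRel G.Adj]
    (a : Fin n → Qb) : ℕ :=
  ∑ p ∈ Finset.univ.filter (fun p : Fin n × Fin n => p.1 < p.2 ∧ G.Adj p.1 p.2),
    (a p.1).val * (a p.2).val

/-- The graph state vector `|G⟩ = CZ(G) |+⟩^{⊗n}`. -/
def graphVec (n : ℕ) (G : SimpleGraph (Fin n)) [DecidableRel G.Adj] :
    (Fin n → Qb) → ℂ :=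
  fun a => ((-1 : ℂ)) ^ (quadForm n G a) / (Real.sqrt (2 ^ n) : ℂ)

/-- The shifted graph state vector `|G^{x⃗}⟩ = (Z^{x₁} ⊗ ⋯ ⊗ Z^{x_n})|G⟩`. -/
def graphVecX (n : ℕ) (G : SimpleGraph (Fin n)) [DecidableRel G.Adj]
    (x : Fin n → Qb) : (Fin n → Qb) → ℂ :=
  fun a => ((-1 : ℂ)) ^ (∑ i, (x i).val * (a i).val) * graphVec n G a

/-- The operator `Z^{x₁}_{A₁} ⊗ ⋯ ⊗ Z^{x_n}_{A_n} ⊗ ⟨G^{x⃗}|_{R₁⋯R_n}`, mapping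
the `2n`-qubit system `A₁⋯A_n R₁⋯R_n` to `A₁⋯A_n`. -/
def Bop (n : ℕ) (G : SimpleGraph (Fin n)) [DecidableRel G.Adj] (x : Fin n → Qb) :
    Matrix (Fin n → Qb) ((Fin n → Qb) × (Fin n → Qb)) ℂ :=
  Matrix.of fun a s =>
    (∏ i, Zop2 (x i) (a i) (s.1 i)) * (starRingEnd ℂ) (graphVecX n G x s.2)

/-- The graph state distribution channel
`L^{(G)}(ρ) = ∑_{x⃗} (Z^{x⃗} ⊗ ⟨G^{x⃗}|) ρ (Z^{x⃗} ⊗ |G^{x⃗}⟩)`. -/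
def graphChannel (n : ℕ) (G : SimpleGraph (Fin n)) [DecidableRel G.Adj]
    (ρ : Matrix ((Fin n → Qb) × (Fin n → Qb)) ((Fin n → Qb) × (Fin n → Qb)) ℂ) :
    Matrix (Fin n → Qb) (Fin n → Qb) ℂ :=
  ∑ x : Fin n → Qb, Bop n G x * ρ * (Bop n G x)ᴴ

/-- The tensor product `ρ₁ ⊗ ⋯ ⊗ ρ_n`, with `ρ_i` a state of the qubit pair `A_i R_i`. -/
def prodState (n : ℕ) (ρ : Fin n → Matrix (Qb × Qb) (Qb × Qb) ℂ) :
    Matrix ((Fin n → Qb) × (Fin n → Qb)) ((Fin n → Qb) × (Fin n → Qb)) ℂ :=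
  Matrix.of fun s s' => ∏ i, ρ i (s.1 i, s.2 i) (s'.1 i, s'.2 i)

/-- The fidelity `⟨ψ|ρ|ψ⟩` of a state `ρ` with a pure state `|ψ⟩`. -/
def fidTo {m' : Type*} [Fintype m'] (ψ : m' → ℂ) (ρ : Matrix m' m' ℂ) : ℂ :=
  ∑ i, ∑ j, (starRingEnd ℂ) (ψ i) * ρ i j * ψ j

/-! Each Kraus operator `Bop n G x` sends the bra `⟨G|` to the real vector `G^x ⊗ G^x` on
`A₁⋯A_n R₁⋯R_n`, so the left side is `∑_x ⟨G^x G^x|ρ|G^x G^x⟩`, while the right side is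
`∑_x ⟨φ_x|ρ|φ_x⟩` for the product Bell vectors `φ_x = ⊗_i Φ^{z_i,x_i}`. The two families have the
same Gram operator `∑_x |v_x⟩⟨v_x|`: its `(a b, a' b')` entry vanishes unless `a + b = a' + b'`
(by character orthogonality on the left, by the support of the Bell vectors on the right), and then
both equal `(-1)^{(a + a')·A(G)(a + b)} / 2^n`, by the polarization identity
`Q(a + y) = Q(a) + Q(y) + a·A(G)y` of the quadratic form `Q` of `G` over `ZMod 2`. -/

open Finset ComplexConjugate

def signChar : AddChar Qb ℂ where
  toFun u := (-1) ^ u.val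
  map_zero_eq_one' := by simp
  map_add_eq_mul' u v := by
    rw [ZMod.val_add, ← pow_add, neg_one_pow_eq_pow_mod_two (u.val + v.val)]

lemma neg_one_pow_eq_signChar (k : ℕ) : (-1 : ℂ) ^ k = signChar k := by
  rw [signChar, AddChar.coe_mk, ZMod.val_natCast, ← neg_one_pow_eq_pow_mod_two]

@[simp]
lemma conj_signChar (u : Qb) : conj (signChar u) = signChar u := by
  simp [signChar]

lemma signChar_sum {ι : Type*} (s : Finset ι) (f : ι → Qb) :
    signChar (∑ i ∈ s, f i) = ∏ i ∈ s, signChar (f i) := by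
  classical
  induction s using Finset.induction_on with
  | empty => simp
  | insert i s hi ih => rw [sum_insert hi, prod_insert hi, AddChar.map_add_eq_mul, ih]

lemma sum_signChar_mul (w : Qb) : ∑ u : Qb, signChar (u * w) = if w = 0 then 2 else 0 := by
  rw [show (univ : Finset Qb) = {0, 1} from rfl, sum_pair zero_ne_one]
  obtain rfl | rfl : w = 0 ∨ w = 1 := by revert w; decide
  · norm_num [signChar]
  · simp [signChar, show (1 : Qb).val = 1 from rfl]

lemma sum_signChar_dotProduct {ι : Type*} [Fintype ι] [DecidableEq ι] (w : ι → Qb) :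
    ∑ x : ι → Qb, signChar (x ⬝ᵥ w) = if w = 0 then 2 ^ Fintype.card ι else 0 := by
  simp only [dotProduct, signChar_sum]
  rw [← Fintype.prod_sum fun i u => signChar (u * w i)]
  simp only [sum_signChar_mul, prod_ite_zero, prod_const, card_univ, mem_univ, true_imp_iff,
    funext_iff, Pi.zero_apply]

section CharTwo

variable {ι R : Type*} [Ring R] [CharP R 2] (u v w : ι → R)

lemma charTwo_pi_add_eq_zero : u + v = 0 ↔ u = v := by
  simp only [funext_iff, Pi.add_apply, Pi.zero_apply, CharTwo.add_eq_zero]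

lemma charTwo_pi_eq_add_iff : u = v + w ↔ w = u + v := by
  simp only [funext_iff, Pi.add_apply]
  exact forall_congr' fun i => by rw [eq_comm (a := w i), CharTwo.add_eq_iff_eq_add, add_comm]

lemma charTwo_pi_add_cancel_left : u + (u + v) = v :=
  funext fun i => CharTwo.add_cancel_left (u i) (v i)

end CharTwo

section Graph

variable {V : Type*} (α : Type*) (G : SimpleGraph V) [DecidableRel G.Adj]

def upperAdjMatrix [LinearOrder V] [Zero α] [One α] : Matrix V V α :=
  of fun i j => if i < j ∧ G.Adj i j then 1 else 0

lemma upperAdjMatrix_add_transpose [LinearOrder V] [AddMonoidWithOne α] :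
    upperAdjMatrix α G + (upperAdjMatrix α G)ᵀ = G.adjMatrix α := by
  ext i j
  simp only [upperAdjMatrix, Matrix.add_apply, transpose_apply, of_apply,
    SimpleGraph.adjMatrix_apply, G.adj_comm j i]
  by_cases hij : G.Adj i j
  · rcases lt_or_gt_of_ne (G.ne_of_adj hij) with h | h
    · simp [h, hij, h.not_gt]
    · simp [h, hij, h.not_gt]
  · simp [hij]

end Graph

section Fidelity

variable {m : Type*} [Fintype m]

lemma fidTo_eq_star_dotProduct_mulVec (ψ : m → ℂ) (M : Matrix m m ℂ) :
    fidTo ψ M = star ψ ⬝ᵥ M *ᵥ ψ := by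
  simp only [fidTo, dotProduct, mulVec, mul_sum, mul_assoc]
  rfl

lemma fidTo_eq_sum_prod (ψ : m → ℂ) (M : Matrix m m ℂ) :
    fidTo ψ M = ∑ p : m × m, conj (ψ p.1) * M p.1 p.2 * ψ p.2 :=
  (Fintype.sum_prod_type' fun i j => conj (ψ i) * M i j * ψ j).symm

lemma fidTo_sum {ι : Type*} (ψ : m → ℂ) (s : Finset ι) (M : ι → Matrix m m ℂ) :
    fidTo ψ (∑ x ∈ s, M x) = ∑ x ∈ s, fidTo ψ (M x) := by
  simp only [fidTo_eq_star_dotProduct_mulVec, sum_mulVec, dotProduct_sum]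

lemma fidTo_mul_mul_conjTranspose {k : Type*} [Fintype k] (ψ : m → ℂ) (B : Matrix m k ℂ)
    (ρ : Matrix k k ℂ) : fidTo ψ (B * ρ * Bᴴ) = fidTo (Bᴴ *ᵥ ψ) ρ := by
  rw [fidTo_eq_star_dotProduct_mulVec, fidTo_eq_star_dotProduct_mulVec, star_mulVec,
    conjTranspose_conjTranspose, ← mulVec_mulVec, ← mulVec_mulVec, dotProduct_mulVec]

lemma sum_fidTo_eq_sum_mul_sum_conj_mul {ι : Type*} [Fintype ι] (φ : ι → m → ℂ)
    (ρ : Matrix m m ℂ) :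
    ∑ x, fidTo (φ x) ρ = ∑ s, ∑ s', ρ s s' * ∑ x, conj (φ x s) * φ x s' := by
  simp only [fidTo, mul_sum]
  rw [sum_comm]
  refine sum_congr rfl fun s _ => ?_
  rw [sum_comm]
  exact sum_congr rfl fun s' _ => sum_congr rfl fun x _ => by ring

lemma sum_fidTo_eq_of_sum_conj_mul_eq {ι κ : Type*} [Fintype ι] [Fintype κ]
    (φ : ι → m → ℂ) (ψ : κ → m → ℂ)
    (h : ∀ s s', ∑ x, conj (φ x s) * φ x s' = ∑ y, conj (ψ y s) * ψ y s')
    (ρ : Matrix m m ℂ) : ∑ x, fidTo (φ x) ρ = ∑ y, fidTo (ψ y) ρ := by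
  simp only [sum_fidTo_eq_sum_mul_sum_conj_mul, h]

end Fidelity

lemma prod_fidTo_eq_fidTo_prodState {n : ℕ} (ψ : Fin n → Qb × Qb → ℂ)
    (ρ : Fin n → Matrix (Qb × Qb) (Qb × Qb) ℂ) :
    ∏ i, fidTo (ψ i) (ρ i) = fidTo (fun s => ∏ i, ψ i (s.1 i, s.2 i)) (prodState n ρ) := by
  let e : (Fin n → (Qb × Qb) × (Qb × Qb))
      ≃ ((Fin n → Qb) × (Fin n → Qb)) × ((Fin n → Qb) × (Fin n → Qb)) :=
    (Equiv.arrowProdEquivProdArrow _ _ _).trans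
      ((Equiv.arrowProdEquivProdArrow _ _ _).prodCongr (Equiv.arrowProdEquivProdArrow _ _ _))
  simp only [fidTo_eq_sum_prod]
  rw [Fintype.prod_sum]
  exact Fintype.sum_equiv e _ _ fun g => by simp [e, prodState, prod_mul_distrib]

lemma ofReal_sqrt_two_pow_sq (n : ℕ) : ((√(2 ^ n) : ℝ) : ℂ) ^ 2 = 2 ^ n := by
  rw [← Complex.ofReal_pow, Real.sq_sqrt (by positivity)]
  push_cast
  rfl

lemma ofReal_sqrt_two_pow_mul_self (n : ℕ) : ((√2 : ℝ) : ℂ) ^ n * ((√2 : ℝ) : ℂ) ^ n = 2 ^ n := by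
  rw [← mul_pow, ← Complex.ofReal_mul, Real.mul_self_sqrt zero_le_two]
  push_cast
  rfl

lemma Zop2_apply (z i j : Qb) : Zop2 z i j = if i = j then signChar (z * i) else 0 := by
  rw [Zop2, of_apply, neg_one_pow_eq_signChar]
  push_cast [ZMod.natCast_zmod_val]
  rfl

lemma prod_Zop2 {n : ℕ} (x a b : Fin n → Qb) :
    ∏ i, Zop2 (x i) (a i) (b i) = if a = b then signChar (x ⬝ᵥ a) else 0 := by
  simp only [Zop2_apply]
  rw [Finset.prod_ite_zero, ← signChar_sum]
  simp [funext_iff, dotProduct]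

lemma bellVec_eq (z x j k : Qb) :
    bellVec z x (j, k) = if j = k + x then signChar (j * z) / (√2 : ℂ) else 0 := by
  rw [bellVec, neg_one_pow_eq_signChar, ZMod.natCast_zmod_val]

@[simp]
lemma conj_bellVec (z x : Qb) (jk : Qb × Qb) : conj (bellVec z x jk) = bellVec z x jk := by
  obtain ⟨j, k⟩ := jk
  rw [bellVec_eq]
  split_ifs <;> simp [Complex.conj_ofReal]

lemma prod_bellVec {n : ℕ} (z x a b : Fin n → Qb) :
    ∏ i, bellVec (z i) (x i) (a i, b i)
      = if a = b + x then signChar (a ⬝ᵥ z) / (√2 : ℂ) ^ n else 0 := by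
  simp only [bellVec_eq]
  rw [Finset.prod_ite_zero, prod_div_distrib, ← signChar_sum, prod_const, card_univ,
    Fintype.card_fin]
  simp [funext_iff, dotProduct]

lemma sum_prod_bellVec_mul {n : ℕ} (z : (Fin n → Qb) → Fin n → Qb) (a b a' b' : Fin n → Qb) :
    ∑ y, (∏ i, bellVec (z y i) (y i) (a i, b i)) * ∏ i, bellVec (z y i) (y i) (a' i, b' i)
      = if a + b = a' + b' then signChar ((a + a') ⬝ᵥ z (a + b)) / 2 ^ n else 0 := by
  simp only [prod_bellVec, charTwo_pi_eq_add_iff, ite_mul, zero_mul, mul_ite, mul_zero,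
    sum_ite_eq', mem_univ, if_true]
  by_cases h : a + b = a' + b'
  · rw [if_pos h.symm, if_pos h, ← h, add_dotProduct, AddChar.map_add_eq_mul,
      ← ofReal_sqrt_two_pow_mul_self]
    ring
  · rw [if_neg (Ne.symm h), if_neg h]

section GraphState

variable {n : ℕ} (G : SimpleGraph (Fin n)) [DecidableRel G.Adj]

lemma quadForm_cast (a : Fin n → Qb) :
    (quadForm n G a : Qb) = a ⬝ᵥ upperAdjMatrix Qb G *ᵥ a := by
  simp only [quadForm, Nat.cast_sum, sum_filter, Nat.cast_ite, Nat.cast_mul,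
    ZMod.natCast_zmod_val, Nat.cast_zero, Fintype.sum_prod_type, dotProduct, mulVec,
    upperAdjMatrix, of_apply, mul_sum, ite_mul, one_mul, zero_mul, mul_ite, mul_zero]

lemma quadForm_add_cast (a y : Fin n → Qb) :
    (quadForm n G (a + y) : Qb)
      = quadForm n G a + quadForm n G y + a ⬝ᵥ G.adjMatrix Qb *ᵥ y := by
  have transpose_term : a ⬝ᵥ (upperAdjMatrix Qb G)ᵀ *ᵥ y = y ⬝ᵥ upperAdjMatrix Qb G *ᵥ a := by
    rw [dotProduct_mulVec, vecMul_transpose, dotProduct_comm]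
  rw [quadForm_cast, quadForm_cast, quadForm_cast, ← upperAdjMatrix_add_transpose, add_mulVec,
    dotProduct_add, transpose_term]
  simp only [mulVec_add, add_dotProduct, dotProduct_add]
  ring

lemma graphVec_eq (a : Fin n → Qb) :
    graphVec n G a = signChar (quadForm n G a) / (√(2 ^ n) : ℂ) := by
  rw [graphVec, neg_one_pow_eq_signChar]

lemma graphVecX_eq (x a : Fin n → Qb) :
    graphVecX n G x a = signChar (x ⬝ᵥ a + quadForm n G a) / (√(2 ^ n) : ℂ) := by
  rw [graphVecX, graphVec_eq, neg_one_pow_eq_signChar, AddChar.map_add_eq_mul, mul_div_assoc]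
  push_cast [ZMod.natCast_zmod_val]
  rfl

@[simp]
lemma conj_graphVecX (x a : Fin n → Qb) : conj (graphVecX n G x a) = graphVecX n G x a := by
  simp [graphVecX_eq]

lemma conjTranspose_Bop_mulVec_graphVec (x : Fin n → Qb) :
    (Bop n G x)ᴴ *ᵥ graphVec n G = fun s => graphVecX n G x s.1 * graphVecX n G x s.2 := by
  ext ⟨a, b⟩
  change ∑ c, conj (Bop n G x c (a, b)) * graphVec n G c = _
  simp only [Bop, of_apply, prod_Zop2, map_mul, Complex.conj_conj, apply_ite conj,
    conj_signChar, map_zero, ite_mul, zero_mul, sum_ite_eq', mem_univ, if_true]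
  simp only [graphVecX_eq, graphVec_eq, AddChar.map_add_eq_mul]
  ring

lemma fidTo_graphChannel
    (P : Matrix ((Fin n → Qb) × (Fin n → Qb)) ((Fin n → Qb) × (Fin n → Qb)) ℂ) :
    fidTo (graphVec n G) (graphChannel n G P)
      = ∑ x, fidTo (fun s => graphVecX n G x s.1 * graphVecX n G x s.2) P := by
  simp only [graphChannel, fidTo_sum, fidTo_mul_mul_conjTranspose,
    conjTranspose_Bop_mulVec_graphVec]

lemma sum_graphVecX_mul (a b a' b' : Fin n → Qb) :
    ∑ x, graphVecX n G x a * graphVecX n G x b * (graphVecX n G x a' * graphVecX n G x b')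
      = if a + b = a' + b' then
          signChar (quadForm n G a + quadForm n G b + quadForm n G a' + quadForm n G b') / 2 ^ n
        else 0 := by
  have term : ∀ x,
      graphVecX n G x a * graphVecX n G x b * (graphVecX n G x a' * graphVecX n G x b')
        = signChar (x ⬝ᵥ (a + b + (a' + b')))
          * (signChar (quadForm n G a + quadForm n G b + quadForm n G a' + quadForm n G b')
            / (2 ^ n) ^ 2) := by
    intro x
    simp only [graphVecX_eq, dotProduct_add, AddChar.map_add_eq_mul, ← ofReal_sqrt_two_pow_sq n]
    ring
  rw [sum_congr rfl fun x _ => term x, ← sum_mul, sum_signChar_dotProduct, Fintype.card_fin]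
  simp only [charTwo_pi_add_eq_zero]
  split_ifs
  · field_simp
  · rw [zero_mul]

lemma signChar_quadForm_add_of_add_eq {a b a' b' : Fin n → Qb} (h : a + b = a' + b') :
    signChar (quadForm n G a + quadForm n G b + quadForm n G a' + quadForm n G b')
      = signChar ((a + a') ⬝ᵥ G.adjMatrix Qb *ᵥ (a + b)) := by
  obtain ⟨y, rfl, rfl⟩ : ∃ y, b = a + y ∧ b' = a' + y :=
    ⟨a + b, (charTwo_pi_add_cancel_left a b).symm, by rw [h, charTwo_pi_add_cancel_left]⟩
  simp only [quadForm_add_cast, charTwo_pi_add_cancel_left, add_dotProduct]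
  congr 1
  linear_combination (quadForm n G a + quadForm n G y + quadForm n G a' : Qb) *
    CharTwo.two_eq_zero (R := Qb)

end GraphState

theorem fidelity_after_graph_state_distribution_general (n : ℕ)
    (G : SimpleGraph (Fin n)) [DecidableRel G.Adj]
    (ρ : Fin n → Matrix (Qb × Qb) (Qb × Qb) ℂ) :
    fidTo (graphVec n G) (graphChannel n G (prodState n ρ))
      = ∑ x : Fin n → Qb, ∏ i : Fin n,
          fidTo (bellVec (∑ j ∈ Finset.univ.filter (fun j => G.Adj i j), x j) (x i))
            (ρ i) := by
  simp only [prod_fidTo_eq_fidTo_prodState, fidTo_graphChannel]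
  refine sum_fidTo_eq_of_sum_conj_mul_eq _ _ (fun ⟨a, b⟩ ⟨a', b'⟩ => ?_) _
  simp only [map_mul, map_prod, conj_graphVecX, conj_bellVec]
  rw [sum_graphVecX_mul, sum_prod_bellVec_mul (fun x i => ∑ j ∈ univ.filter (G.Adj i), x j)]
  split_ifs with h
  · rw [signChar_quadForm_add_of_add_eq G h]
    congr 3
    ext i
    rw [G.adjMatrix_mulVec_apply, G.neighborFinset_eq_filter]
  · rfl

/-- **Fidelity after graph state distribution** (Proposition 3 of the paper):
the fidelity of the output with `|G⟩` equals
`∑_{x⃗} ∏_i ⟨Φ^{z_i,x_i}|ρ_i|Φ^{z_i,x_i}⟩` with `z⃗ = A(G) x⃗ (mod 2)`. -/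
theorem fidelity_after_graph_state_distribution (n : ℕ) (hn : 2 ≤ n)
    (G : SimpleGraph (Fin n)) [DecidableRel G.Adj]
    (ρ : Fin n → Matrix (Qb × Qb) (Qb × Qb) ℂ)
    (hρ : ∀ i, (ρ i).PosSemidef ∧ (ρ i).trace = 1) :
    fidTo (graphVec n G) (graphChannel n G (prodState n ρ))
      = ∑ x : Fin n → Qb, ∏ i : Fin n,
          fidTo (bellVec (∑ j ∈ Finset.univ.filter (fun j => G.Adj i j), x j) (x i))
            (ρ i) :=
  fidelity_after_graph_state_distribution_general n G ρ
end
end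

section
/- Linear program for the steady-state expected function value of an ergodic MDP: consider a finite MDP with state set S, action set A, and transition matrices {T^a}_{a∈A}, and assume that for every decision function d the induced chain P^d is irreducible and aperiodic (so that lim_{t→∞}(P^d)^t exists and equals |v_d⟩⟨γ| for a unique strictly positive stationary probability vector v_d). Then for every f : S → ℝ, sup over decision functions d of lim_{t→∞} E[f(S(t))] = sup_d ⟨f|v_d⟩ equals the optimal value of the linear program: maximize ⟨f|v⟩ over vectors v, {w_a}_{a∈A} in ℝ^S subject to the componentwise constraints 0 ≤ w_a ≤ v ≤ 1 for all a ∈ A, ∑_{s∈S}⟨s|v⟩ = 1, and ∑_{a∈A} w_a = v = ∑_{a∈A} T^a w_a. Moreover, every feasible point defines a decision function via d(s)(a) = ⟨s|w_a⟩/⟨s|v⟩ whenever ⟨s|v⟩ > 0. -/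
open BigOperators Filter Matrix

noncomputable section

/-- The transition matrix `P^d(s'; s) = ∑_a T^a(s'; s) d(s)(a)` induced by a
decision function `d`. -/
def PdMat {S A : Type*} [Fintype S] [Fintype A] (T : A → Matrix S S ℝ) (d : S → A → ℝ) :
    Matrix S S ℝ :=
  Matrix.of fun s' s => ∑ a : A, T a s' s * d s a

/-- `d` is a valid decision function: `d s` is a probability distribution on actions. -/
def ValidDec {S A : Type*} [Fintype A] (d : S → A → ℝ) : Prop :=
  (∀ s a, 0 ≤ d s a) ∧ ∀ s, ∑ a : A, d s a = 1

/-- If `P ^ t → M`, then `P * M = M`. -/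
lemma aux_mul_lim {S : Type*} [Fintype S] [DecidableEq S] (P M : Matrix S S ℝ)
    (h : Tendsto (fun t : ℕ => P ^ t) atTop (nhds M)) : P * M = M := by
  have h1 : Tendsto (fun t : ℕ => P ^ (t + 1)) atTop (nhds M) :=
    h.comp (tendsto_add_atTop_nat 1)
  have hc : Continuous fun X : Matrix S S ℝ => P * X :=
    continuous_const.matrix_mul continuous_id
  have h2 : Tendsto (fun t : ℕ => P * P ^ t) atTop (nhds (P * M)) :=
    (hc.tendsto M).comp h
  have heq : (fun t : ℕ => P ^ (t + 1)) = fun t : ℕ => P * P ^ t := by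
    funext t; rw [pow_succ']
  rw [heq] at h1
  exact tendsto_nhds_unique h2 h1

/-- If `P ^ t → |v⟩⟨γ|`, then `v` is stationary for `P`. -/
lemma aux_stationary {S : Type*} [Fintype S] [DecidableEq S] [Nonempty S]
    (P : Matrix S S ℝ) (v : S → ℝ)
    (h : Tendsto (fun t : ℕ => P ^ t) atTop (nhds (Matrix.vecMulVec v (fun _ => 1)))) :
    P *ᵥ v = v := by
  have hm := aux_mul_lim P _ h
  funext s'
  obtain ⟨s₀⟩ := (inferInstance : Nonempty S)
  have := congrFun (congrFun hm s') s₀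
  simpa [Matrix.mul_apply, Matrix.vecMulVec_apply, Matrix.mulVec, dotProduct] using this

/-- Uniqueness of the stationary probability vector when `P ^ t → |v'⟩⟨γ|`. -/
lemma aux_unique {S : Type*} [Fintype S] [DecidableEq S]
    (P : Matrix S S ℝ) (v v' : S → ℝ) (hsum : ∑ s, v s = 1)
    (hst : P *ᵥ v = v)
    (h : Tendsto (fun t : ℕ => P ^ t) atTop (nhds (Matrix.vecMulVec v' (fun _ => 1)))) :
    v = v' := by
  have hpow : ∀ t : ℕ, (P ^ t) *ᵥ v = v := by
    intro t
    induction t with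
    | zero => simp
    | succ n ih => rw [pow_succ, ← Matrix.mulVec_mulVec, hst, ih]
  have hc : Continuous fun X : Matrix S S ℝ => X *ᵥ v :=
    continuous_id.matrix_mulVec continuous_const
  have h2 : Tendsto (fun t : ℕ => (P ^ t) *ᵥ v) atTop
      (nhds (Matrix.vecMulVec v' (fun _ => 1) *ᵥ v)) :=
    (hc.tendsto _).comp h
  have h3 : Tendsto (fun t : ℕ => (P ^ t) *ᵥ v) atTop (nhds v) := by
    simp only [hpow]; exact tendsto_const_nhds
  have h4 : Matrix.vecMulVec v' (fun _ => 1) *ᵥ v = v := tendsto_nhds_unique h2 h3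
  funext s'
  have := congrFun h4 s'
  simp only [Matrix.mulVec, dotProduct, Matrix.vecMulVec_apply, one_mul, mul_one] at this
  rw [← this, ← Finset.mul_sum, hsum, mul_one]

/-- **Linear program for the steady-state expected function value of an ergodic MDP.**
Assuming that for every decision function the induced chain is primitive — i.e.
`(P^d)^t → |v_d⟩⟨γ|` for a strictly positive stationary probability vector `v_d`
(the content of irreducibility and aperiodicity) — the supremum of the steady-state
expected value of `f` equals the optimal value of the stated linear program, and every
feasible point yields a decision function via `d(s)(a) = ⟨s|w_a⟩/⟨s|v⟩`. -/
theorem lp_steady_state_ergodic {S A : Type*} [Fintype S] [Fintype A] [DecidableEq S]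
    [Nonempty S] [Nonempty A]
    (T : A → Matrix S S ℝ)
    (hTpos : ∀ a s' s, 0 ≤ T a s' s) (hTsum : ∀ a s, ∑ s' : S, T a s' s = 1)
    (hErg : ∀ d : S → A → ℝ, ValidDec d →
      ∃ v : S → ℝ, (∀ s, 0 < v s) ∧ (∑ s, v s = 1) ∧
        Tendsto (fun t : ℕ => PdMat T d ^ t) atTop
          (nhds (Matrix.vecMulVec v (fun _ => 1))))
    (f : S → ℝ) :
    (sSup {L : ℝ | ∃ (d : S → A → ℝ) (v : S → ℝ), ValidDec d ∧ (∀ s, 0 < v s) ∧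
        (∑ s, v s = 1) ∧
        Tendsto (fun t : ℕ => PdMat T d ^ t) atTop
          (nhds (Matrix.vecMulVec v (fun _ => 1))) ∧
        L = ∑ s, f s * v s}
      = sSup {c : ℝ | ∃ (v : S → ℝ) (w : A → S → ℝ),
          (∀ a s, 0 ≤ w a s ∧ w a s ≤ v s) ∧ (∀ s, v s ≤ 1) ∧
          (∑ s, v s = 1) ∧
          (∀ s, ∑ a, w a s = v s) ∧
          (∀ s', ∑ a, (T a).mulVec (w a) s' = v s') ∧
          c = ∑ s, f s * v s}) ∧
    (∀ (v : S → ℝ) (w : A → S → ℝ),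
      ((∀ a s, 0 ≤ w a s ∧ w a s ≤ v s) ∧ (∀ s, v s ≤ 1) ∧ (∑ s, v s = 1) ∧
        (∀ s, ∑ a, w a s = v s) ∧ (∀ s', ∑ a, (T a).mulVec (w a) s' = v s')) →
      ∀ s, 0 < v s → (∀ a, 0 ≤ w a s / v s) ∧ ∑ a, w a s / v s = 1) := by
  constructor
  · apply congrArg sSup
    ext x
    constructor
    · rintro ⟨d, v, ⟨hd0, hd1⟩, hvpos, hvsum, hlim, rfl⟩
      refine ⟨v, fun a s => d s a * v s, ?_, ?_, hvsum, ?_, ?_, rfl⟩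
      · intro a s
        refine ⟨mul_nonneg (hd0 s a) (hvpos s).le, ?_⟩
        have hle : d s a ≤ 1 := by
          rw [← hd1 s]
          exact Finset.single_le_sum (fun a' _ => hd0 s a') (Finset.mem_univ a)
        calc d s a * v s ≤ 1 * v s := by
              exact mul_le_mul_of_nonneg_right hle (hvpos s).le
          _ = v s := one_mul _
      · intro s
        rw [← hvsum]
        exact Finset.single_le_sum (fun s' _ => (hvpos s').le) (Finset.mem_univ s)
      · intro s
        rw [← Finset.sum_mul, hd1 s, one_mul]
      · intro s'
        have hst := aux_stationary (PdMat T d) v hlim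
        have := congrFun hst s'
        rw [← this]
        simp only [Matrix.mulVec, dotProduct, PdMat, Matrix.of_apply]
        rw [Finset.sum_comm]
        congr 1
        funext s
        rw [Finset.sum_mul]
        congr 1
        funext a
        ring
    · rintro ⟨v, w, hw, hv1, hvsum, hwsum, hstat, rfl⟩
      set d : S → A → ℝ := fun s a =>
        if 0 < v s then w a s / v s else (Fintype.card A : ℝ)⁻¹ with hd_def
      have hcard : (0 : ℝ) < (Fintype.card A : ℝ) := by
        exact_mod_cast Fintype.card_pos
      have hd : ValidDec d := by
        constructor
        · intro s a
          by_cases hs : 0 < v s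
          · simp only [hd_def, if_pos hs]
            exact div_nonneg (hw a s).1 hs.le
          · simp only [hd_def, if_neg hs]
            exact inv_nonneg.mpr hcard.le
        · intro s
          by_cases hs : 0 < v s
          · simp only [hd_def, if_pos hs]
            rw [← Finset.sum_div, hwsum s, div_self hs.ne']
          · simp only [hd_def, if_neg hs]
            rw [Finset.sum_const, Finset.card_univ, nsmul_eq_mul]
            field_simp
      obtain ⟨v', hv'pos, hv'sum, hlim⟩ := hErg d hd
      -- key: d s a * v s = w a s
      have hkey : ∀ s a, d s a * v s = w a s := by
        intro s a
        by_cases hs : 0 < v s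
        · simp only [hd_def, if_pos hs]
          exact div_mul_cancel₀ _ hs.ne'
        · have hv0 : v s = 0 := le_antisymm (not_lt.mp hs) (le_trans (hw a s).1 (hw a s).2)
          have hw0 : w a s = 0 := le_antisymm (hv0 ▸ (hw a s).2) (hw a s).1
          simp [hv0, hw0]
      have hst : PdMat T d *ᵥ v = v := by
        funext s'
        have : (PdMat T d *ᵥ v) s' = ∑ a, (T a).mulVec (w a) s' := by
          simp only [Matrix.mulVec, dotProduct, PdMat, Matrix.of_apply]
          have hterm : ∀ s, (∑ a, T a s' s * d s a) * v s = ∑ a, T a s' s * w a s := by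
            intro s
            rw [Finset.sum_mul]
            exact Finset.sum_congr rfl fun a _ => by rw [mul_assoc, hkey]
          rw [Finset.sum_congr rfl fun s _ => hterm s, Finset.sum_comm]
        rw [this, hstat s']
      have hveq : v = v' := aux_unique (PdMat T d) v v' hvsum hst hlim
      exact ⟨d, v', hd, hv'pos, hv'sum, hlim, by rw [← hveq]⟩
  · rintro v w ⟨hw, -, -, hwsum, -⟩ s hvs
    constructor
    · intro a
      exact div_nonneg (hw a s).1 hvs.le
    · rw [← Finset.sum_div, hwsum s, div_self hvs.ne']
end
end

section
/- Expected collective waiting time for elementary links under the t* = ∞ memory-cutoff policy: let p ∈ (0,1], M ≥ 1, and t_req ∈ ℕ. Let T₁, …, T_M be independent, identically distributed random variables with the geometric distribution Pr[T_e = t] = p(1−p)^{t−1} for t ∈ {1,2,3,…} (the time of first successful generation of link e), and define the waiting time W := max( max_{1≤e≤M} T_e − t_req, 1 ). Then E[W] = ∑_{k=1}^{M} C(M,k)·(−1)^{k+1}·(1 + (1−p_k)^{t_req+1}/p_k), where p_k := 1 − (1−p)^k and C(M,k) is the binomial coefficient. -/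
/-!
Write `q = 1 - p` and `V = max_e T_e`. Independence turns `P(V ≤ s)` into the product of the
geometric distribution functions, `(1 - q ^ s) ^ M`. Since `W = 1 + (V - (t_req + 1))` in
truncated subtraction, the tail-sum formula gives `E[W] = 1 + ∑ₙ P(V > t_req + 1 + n)`.
Expanding `1 - (1 - x) ^ M` binomially makes each tail a signed combination of the powers
`(q ^ k) ^ (t_req + 1 + n)`, whose sums over `n` are geometric series, and the leading `1` is
absorbed by `∑ₖ C(M, k) (-1) ^ (k + 1) = 1`.
-/

open MeasureTheory Finset ENNReal

theorem one_sub_one_sub_pow_eq_sum {R : Type*} [CommRing R] (x : R) (M : ℕ) :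
    1 - (1 - x) ^ M = ∑ k ∈ Icc 1 M, (M.choose k : R) * (-1) ^ (k + 1) * x ^ k := by
  have h := add_pow (-x) 1 M
  rw [neg_add_eq_sub, Nat.range_succ_eq_Icc_zero, ← insert_Icc_add_one_left_eq_Icc (Nat.zero_le M),
    sum_insert (by simp)] at h
  rw [h]
  simp only [pow_zero, one_pow, mul_one, Nat.choose_zero_right, Nat.cast_one, zero_add]
  rw [sub_add_cancel_left, ← sum_neg_distrib]
  refine sum_congr rfl fun k _ => ?_
  rw [neg_pow x, pow_succ]
  ring

theorem sum_choose_mul_neg_one_pow {R : Type*} [CommRing R] {M : ℕ} (hM : M ≠ 0) :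
    ∑ k ∈ Icc 1 M, (M.choose k : R) * (-1) ^ (k + 1) = 1 := by
  simpa [zero_pow hM] using (one_sub_one_sub_pow_eq_sum (1 : R) M).symm

theorem hasSum_one_sub_one_sub_pow {q : ℝ} (hq0 : 0 ≤ q) (hq1 : q < 1) (m M : ℕ) :
    HasSum (fun n : ℕ => 1 - (1 - q ^ (m + n)) ^ M)
      (∑ k ∈ Icc 1 M, (M.choose k : ℝ) * (-1) ^ (k + 1) * ((q ^ k) ^ m / (1 - q ^ k))) := by
  simp_rw [one_sub_one_sub_pow_eq_sum]
  refine hasSum_sum fun k hk => ?_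
  have hqk : q ^ k < 1 := pow_lt_one₀ hq0 hq1 (by simp at hk; omega)
  have hterm : ∀ n : ℕ, (M.choose k : ℝ) * (-1) ^ (k + 1) * (q ^ (m + n)) ^ k
      = (M.choose k : ℝ) * (-1) ^ (k + 1) * (q ^ k) ^ m * (q ^ k) ^ n := fun n => by ring
  simp_rw [hterm, div_eq_mul_inv, ← mul_assoc]
  exact (hasSum_geometric_of_lt_one (pow_nonneg hq0 k) hqk).mul_left _

theorem lintegral_natCast_eq_tsum_measure_lt {Ω : Type*} [MeasurableSpace Ω] (μ : Measure Ω)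
    {N : Ω → ℕ} (hN : Measurable N) :
    ∫⁻ ω, (N ω : ℝ≥0∞) ∂μ = ∑' n : ℕ, μ {ω | n < N ω} := by
  have hset : ∀ n : ℕ, MeasurableSet {ω | n < N ω} := fun n => hN measurableSet_Ioi
  have hcount : ∀ ω, (N ω : ℝ≥0∞) = ∑' n : ℕ, {ω | n < N ω}.indicator 1 ω := by
    intro ω
    rw [tsum_eq_sum (s := range (N ω)) (fun n hn => by simp_all)]
    simp [Set.indicator_apply, filter_true_of_mem]
  simp_rw [hcount]
  rw [lintegral_tsum fun n => (measurable_one.indicator (hset n)).aemeasurable]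
  simp [lintegral_indicator_one (hset _)]

theorem measure_mem_finset_eq_sum {Ω β : Type*} [MeasurableSpace Ω] [MeasurableSpace β]
    [MeasurableSingletonClass β] (μ : Measure Ω) {X : Ω → β} (hX : Measurable X) (S : Finset β) :
    μ {ω | X ω ∈ S} = ∑ b ∈ S, μ {ω | X ω = b} :=
  (sum_measure_preimage_singleton S fun b _ => hX (measurableSet_singleton b)).symm

theorem measure_forall_mem_eq_prod {ι Ω β : Type*} [Fintype ι] [MeasurableSpace Ω]
    [MeasurableSpace β] [MeasurableSingletonClass β] {μ : Measure Ω} {X : ι → Ω → β}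
    (hX : ∀ i, Measurable (X i))
    (hindep : ∀ b : ι → β, μ {ω | ∀ i, X i ω = b i} = ∏ i, μ {ω | X i ω = b i})
    (S : ι → Finset β) :
    μ {ω | ∀ i, X i ω ∈ S i} = ∏ i, μ {ω | X i ω ∈ S i} := by
  classical
  calc μ {ω | ∀ i, X i ω ∈ S i}
      = μ {ω | (fun i => X i ω) ∈ Fintype.piFinset S} := by simp only [Fintype.mem_piFinset]
    _ = ∑ b ∈ Fintype.piFinset S, ∏ i, μ {ω | X i ω = b i} := by
        simp only [measure_mem_finset_eq_sum μ (measurable_pi_lambda _ hX), funext_iff, hindep]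
    _ = ∏ i, μ {ω | X i ω ∈ S i} := by
        simp only [prod_univ_sum, measure_mem_finset_eq_sum μ (hX _)]

theorem measure_mem_range_succ_eq_of_geometric {Ω : Type*} [MeasurableSpace Ω] {μ : Measure Ω}
    {X : Ω → ℕ} (hX : Measurable X) {p : ℝ} (hp0 : 0 ≤ p) (hp1 : p ≤ 1)
    (hgeom : ∀ t : ℕ, μ {ω | X ω = t} = if t = 0 then 0 else ENNReal.ofReal (p * (1 - p) ^ (t - 1)))
    (s : ℕ) :
    μ {ω | X ω ∈ range (s + 1)} = ENNReal.ofReal (1 - (1 - p) ^ s) := by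
  have hpmf : ∑ t ∈ range s, p * (1 - p) ^ t = 1 - (1 - p) ^ s := by
    simpa [← mul_sum] using mul_neg_geom_sum (1 - p) s
  rw [measure_mem_finset_eq_sum μ hX, sum_range_succ', ← hpmf,
    ofReal_sum_of_nonneg fun t _ => mul_nonneg hp0 (pow_nonneg (by linarith) t)]
  simp [hgeom]

theorem measure_lt_sup_eq_of_geometric {ι Ω : Type*} [Fintype ι] [MeasurableSpace Ω]
    {μ : Measure Ω} [IsProbabilityMeasure μ] {X : ι → Ω → ℕ} (hX : ∀ i, Measurable (X i))
    {p : ℝ} (hp0 : 0 ≤ p) (hp1 : p ≤ 1)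
    (hgeom : ∀ i, ∀ t : ℕ,
      μ {ω | X i ω = t} = if t = 0 then 0 else ENNReal.ofReal (p * (1 - p) ^ (t - 1)))
    (hindep : ∀ t : ι → ℕ, μ {ω | ∀ i, X i ω = t i} = ∏ i, μ {ω | X i ω = t i}) (s : ℕ) :
    μ {ω | s < univ.sup fun i => X i ω}
      = ENNReal.ofReal (1 - (1 - (1 - p) ^ s) ^ Fintype.card ι) := by
  have hcdf_nonneg : 0 ≤ 1 - (1 - p) ^ s := sub_nonneg.2 (pow_le_one₀ (by linarith) (by linarith))
  have hbox : {ω | s < univ.sup fun i => X i ω} = {ω | ∀ i, X i ω ∈ range (s + 1)}ᶜ := by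
    ext ω; simp
  have hbox_meas : MeasurableSet {ω | ∀ i, X i ω ∈ range (s + 1)} := by measurability
  rw [hbox, prob_compl_eq_one_sub hbox_meas, measure_forall_mem_eq_prod hX hindep,
    prod_congr rfl fun i _ => measure_mem_range_succ_eq_of_geometric (hX i) hp0 hp1 (hgeom i) s,
    prod_const, card_univ, ← ofReal_pow hcdf_nonneg, ← ofReal_one,
    ← ofReal_sub _ (pow_nonneg hcdf_nonneg _)]

theorem lintegral_max_sub_one_eq_one_add_tsum {Ω : Type*} [MeasurableSpace Ω] (μ : Measure Ω)
    [IsProbabilityMeasure μ] {N : Ω → ℕ} (hN : Measurable N) (m : ℕ) :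
    ∫⁻ ω, ((max (N ω - m) 1 : ℕ) : ℝ≥0∞) ∂μ = 1 + ∑' n : ℕ, μ {ω | m + 1 + n < N ω} := by
  have hsplit : ∀ ω, (max (N ω - m) 1 : ℕ) = 1 + (N ω - (m + 1)) := fun ω => by omega
  have hshift : ∀ n : ℕ, {ω | n < N ω - (m + 1)} = {ω | m + 1 + n < N ω} := fun n => by
    ext ω; exact Nat.lt_sub_iff_add_lt'
  simp_rw [hsplit, Nat.cast_add, Nat.cast_one]
  rw [lintegral_add_left measurable_const, lintegral_const, measure_univ, mul_one,
    lintegral_natCast_eq_tsum_measure_lt μ (N := fun ω => N ω - (m + 1))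
      ((measurable_from_nat (f := fun k => k - (m + 1))).comp hN)]
  simp_rw [hshift]

/-- **Expected collective waiting time for `M` elementary links under the `t* = ∞`
memory-cutoff policy.** The `T e` are i.i.d. geometric random variables on `{1, 2, …}`
with parameter `p` (the time of first successful generation of link `e`), and
`W = max(max_e T_e - t_req, 1)` is the waiting time after a request at time `t_req`. -/
theorem expected_collective_waiting_time_infinite_cutoff
    {Ω : Type*} [MeasurableSpace Ω] (μ : Measure Ω) [IsProbabilityMeasure μ]
    (p : ℝ) (hp0 : 0 < p) (hp1 : p ≤ 1) (M : ℕ) (hM : 1 ≤ M) (treq : ℕ)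
    (T : Fin M → Ω → ℕ) (hmeas : ∀ e, Measurable (T e))
    (hgeom : ∀ e, ∀ t : ℕ,
      μ {ω | T e ω = t} = if t = 0 then 0 else ENNReal.ofReal (p * (1 - p) ^ (t - 1)))
    (hindep : ∀ t : Fin M → ℕ,
      μ {ω | ∀ e, T e ω = t e} = ∏ e : Fin M, μ {ω | T e ω = t e}) :
    ∫ ω, ((max ((Finset.univ.sup fun e => T e ω) - treq) 1 : ℕ) : ℝ) ∂μ
      = ∑ k ∈ Finset.Icc 1 M, (M.choose k : ℝ) * (-1 : ℝ) ^ (k + 1) *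
          (1 + (1 - (1 - (1 - p) ^ k)) ^ (treq + 1) / (1 - (1 - p) ^ k)) := by
  set V : Ω → ℕ := fun ω => univ.sup fun e => T e ω
  have hV : Measurable V := by
    convert Finset.measurable_sup' (univ_nonempty_iff.2 ⟨⟨0, hM⟩⟩) fun e _ => hmeas e using 1
    ext ω; simp [V, sup'_eq_sup]
  set S := ∑ k ∈ Icc 1 M,
    (M.choose k : ℝ) * (-1) ^ (k + 1) * (((1 - p) ^ k) ^ (treq + 1) / (1 - (1 - p) ^ k))
  have hS := hasSum_one_sub_one_sub_pow (sub_nonneg.2 hp1) (by linarith) (treq + 1) M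
  have htail_nonneg : ∀ n : ℕ, 0 ≤ 1 - (1 - (1 - p) ^ (treq + 1 + n)) ^ M := fun n =>
    sub_nonneg.2 (pow_le_one₀ (sub_nonneg.2 (pow_le_one₀ (by linarith) (by linarith)))
      (sub_le_self _ (pow_nonneg (by linarith) _)))
  have hS_nonneg : 0 ≤ S := hS.nonneg htail_nonneg
  have hlin : ∫⁻ ω, ((max (V ω - treq) 1 : ℕ) : ℝ≥0∞) ∂μ = ENNReal.ofReal (1 + S) := by
    rw [lintegral_max_sub_one_eq_one_add_tsum μ hV]
    simp_rw [V, measure_lt_sup_eq_of_geometric hmeas hp0.le hp1 hgeom hindep, Fintype.card_fin]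
    rw [← ofReal_tsum_of_nonneg htail_nonneg hS.summable, hS.tsum_eq, ← ofReal_one,
      ← ofReal_add zero_le_one hS_nonneg]
  have hRHS : ∑ k ∈ Finset.Icc 1 M, (M.choose k : ℝ) * (-1 : ℝ) ^ (k + 1) *
          (1 + (1 - (1 - (1 - p) ^ k)) ^ (treq + 1) / (1 - (1 - p) ^ k)) = 1 + S := by
    simp only [_root_.sub_sub_cancel, mul_add, mul_one, sum_add_distrib, S]
    rw [sum_choose_mul_neg_one_pow (by omega)]
  change ∫ ω, ((max (V ω - treq) 1 : ℕ) : ℝ) ∂μ = _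
  have hW : Measurable fun ω => ((max (V ω - treq) 1 : ℕ) : ℝ) :=
    (measurable_from_nat (f := fun k => ((max (k - treq) 1 : ℕ) : ℝ))).comp hV
  rw [hRHS, integral_eq_lintegral_of_nonneg_ae (.of_forall fun ω => Nat.cast_nonneg _)
    hW.aestronglyMeasurable]
  simp_rw [ofReal_natCast, hlin]
  exact toReal_ofReal (by linarith)
end
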